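/- Let K be a commutative ring, m < n positive integers with n = m + d where d = gcd(m,n), and X, Y two m×n matrices over K. Let A(X,Y) be the (mn/d)×(mn/d) block matrix with n/d block-rows of height m and m/d block-columns of width n, having X on the block diagonal (blocks (i,i)) and Y on the block subdiagonal (blocks (i+1,i)), and zeros elsewhere. Then for every c ∈ K, det A(X + cY, Y) = det A(X, Y). -/
import Mathlib


/-- The (mn/d)×(mn/d) block bidiagonal matrix with `s+1` block-rows of height `m`
(and, when `(s+1)*m = s*n`, `s` block-columns of width `n`), having `X` in the
diagonal blocks `(i,i)` and `Y` in the subdiagonal blocks `(i+1,i)`, zero elsewhere. -/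
def blockBidiag {K : Type*} [CommRing K] {m n : ℕ} (hm : 0 < m) (hn : 0 < n) (s : ℕ)
    (X Y : Matrix (Fin m) (Fin n) K) :
    Matrix (Fin ((s + 1) * m)) (Fin ((s + 1) * m)) K :=
  Matrix.of fun r c =>
    if r.val / m = c.val / n then
      X ⟨r.val % m, Nat.mod_lt _ hm⟩ ⟨c.val % n, Nat.mod_lt _ hn⟩
    else if r.val / m = c.val / n + 1 then
      Y ⟨r.val % m, Nat.mod_lt _ hm⟩ ⟨c.val % n, Nat.mod_lt _ hn⟩
    else 0

/-- The "Pascal translation" matrix: block upper-triangular with blocks of size `b`,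
block `(i,j)` being `(j.choose i) * c^(j-i)` times the identity.  It is the matrix of
the substitution `p(t) ↦ p(t+c)` on vector-valued polynomials in the monomial basis. -/
def trMat {K : Type*} [CommRing K] (b N : ℕ) (c : K) : Matrix (Fin N) (Fin N) K :=
  Matrix.of fun r r' =>
    if r.val % b = r'.val % b then
      ((r'.val / b).choose (r.val / b) : K) * c ^ (r'.val / b - r.val / b)
    else 0

lemma trMat_det {K : Type*} [CommRing K] (b N : ℕ) (c : K) : (trMat b N c).det = 1 := by
  rw [Matrix.det_of_upperTriangular]
  · rw [Finset.prod_congr rfl (fun i _ => ?_), Finset.prod_const_one]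
    simp [trMat]
  · intro i j hji
    have hji' : (j : ℕ) < (i : ℕ) := hji
    simp only [trMat, Matrix.of_apply]
    split_ifs with hmod
    · have hle : j.val / b ≤ i.val / b := Nat.div_le_div_right hji'.le
      have hne : j.val / b ≠ i.val / b := by
        intro hdiv
        have : i.val = j.val := by
          conv_lhs => rw [← Nat.div_add_mod i.val b]
          conv_rhs => rw [← Nat.div_add_mod j.val b]
          rw [hdiv, hmod]
        omega
      rw [Nat.choose_eq_zero_of_lt (lt_of_le_of_ne hle hne)]
      simp
    · rfl

/-- Pascal's rule with powers, in the form needed for the translation identity. -/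
lemma pascal_pow {K : Type*} [CommRing K] (c : K) (l i : ℕ) :
    (l.choose i : K) * c ^ (l - i) * c
      + (if i = 0 then 0 else (l.choose (i - 1) : K) * c ^ (l - (i - 1)))
      = ((l + 1).choose i : K) * c ^ (l + 1 - i) := by
  rcases i with _ | i
  · simp [pow_succ]
  · simp only [Nat.succ_ne_zero, if_neg, Nat.add_sub_cancel]
    rw [Nat.choose_succ_succ' l i]
    rcases Nat.lt_or_ge l (i + 1) with hl | hl
    · rw [Nat.choose_eq_zero_of_lt hl]
      push_cast
      ring
    · have h1 : l - i = (l - (i + 1)) + 1 := by omega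
      have h2 : l + 1 - (i + 1) = (l - (i + 1)) + 1 := by omega
      rw [h2, h1, pow_succ]
      push_cast
      ring

/-- The key intertwining identity: `A(X+cY, Y) ∘ (translation by c on columns)
  = (translation by c on rows) ∘ A(X, Y)`. -/
lemma blockBidiag_mul_trMat {K : Type*} [CommRing K] {m n : ℕ} (hm : 0 < m) (hn : 0 < n)
    (s : ℕ) (hs : (s + 1) * m = s * n) (X Y : Matrix (Fin m) (Fin n) K) (c : K) :
    blockBidiag hm hn s (X + c • Y) Y * trMat n ((s + 1) * m) c
      = trMat m ((s + 1) * m) c * blockBidiag hm hn s X Y := by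
  have hs1 : 1 ≤ s := by
    rcases Nat.eq_zero_or_pos s with h | h
    · subst h; simp at hs; omega
    · exact h
  ext r l
  rw [Matrix.mul_apply, Matrix.mul_apply]
  -- basic bounds
  have hrml : r.val / m < s + 1 := (Nat.div_lt_iff_lt_mul hm).2 r.isLt
  have hlsn : l.val < s * n := hs ▸ l.isLt
  have hlnl : l.val / n < s := (Nat.div_lt_iff_lt_mul hn).2 hlsn
  have hrmod : r.val % m < m := Nat.mod_lt _ hm
  have hlmod : l.val % n < n := Nat.mod_lt _ hn
  -- the right hand side: exactly two (potentially) nonzero terms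
  have hmulsucc : m * (l.val / n + 1) = m * (l.val / n) + m := Nat.mul_succ m _
  have hk1v : m * (l.val / n) + r.val % m < (s + 1) * m := by
    have h' : m * (l.val / n) + r.val % m < m * (s + 1) :=
      calc m * (l.val / n) + r.val % m < m * (l.val / n) + m := by omega
      _ = m * (l.val / n + 1) := (Nat.mul_succ m _).symm
      _ ≤ m * (s + 1) := Nat.mul_le_mul_left m (by omega)
    have h'' : m * (s + 1) = (s + 1) * m := Nat.mul_comm _ _
    omega
  have hk2v : m * (l.val / n + 1) + r.val % m < (s + 1) * m := by
    have h' : m * (l.val / n + 1) + r.val % m < m * (s + 1) :=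
      calc m * (l.val / n + 1) + r.val % m < m * (l.val / n + 1) + m := by omega
      _ = m * (l.val / n + 1 + 1) := (Nat.mul_succ m _).symm
      _ ≤ m * (s + 1) := Nat.mul_le_mul_left m (by omega)
    have h'' : m * (s + 1) = (s + 1) * m := Nat.mul_comm _ _
    omega
  have hk1d : (m * (l.val / n) + r.val % m) / m = l.val / n := by
    rw [Nat.mul_add_div hm, Nat.div_eq_of_lt hrmod, Nat.add_zero]
  have hk2d : (m * (l.val / n + 1) + r.val % m) / m = l.val / n + 1 := by
    rw [Nat.mul_add_div hm, Nat.div_eq_of_lt hrmod, Nat.add_zero]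
  have hk1m : (m * (l.val / n) + r.val % m) % m = r.val % m := by
    rw [Nat.mul_add_mod, Nat.mod_eq_of_lt hrmod]
  have hk2m : (m * (l.val / n + 1) + r.val % m) % m = r.val % m := by
    rw [Nat.mul_add_mod, Nat.mod_eq_of_lt hrmod]
  have hRHS : (∑ k, trMat m ((s + 1) * m) c r k * blockBidiag hm hn s X Y k l)
      = ((l.val / n).choose (r.val / m) : K) * c ^ (l.val / n - r.val / m)
          * X ⟨r.val % m, hrmod⟩ ⟨l.val % n, hlmod⟩
        + ((l.val / n + 1).choose (r.val / m) : K) * c ^ (l.val / n + 1 - r.val / m)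
          * Y ⟨r.val % m, hrmod⟩ ⟨l.val % n, hlmod⟩ := by
    rw [Finset.sum_eq_add_of_mem (⟨m * (l.val / n) + r.val % m, hk1v⟩ : Fin ((s + 1) * m))
      (⟨m * (l.val / n + 1) + r.val % m, hk2v⟩ : Fin ((s + 1) * m))
      (Finset.mem_univ _) (Finset.mem_univ _)
      (by rw [ne_eq, Fin.ext_iff]; simp only; omega) ?_]
    · simp only [trMat, blockBidiag, Matrix.of_apply, hk1d, hk2d, hk1m, hk2m]
      split_ifs <;> (first | ring1 | (exfalso; omega))
    · intro k _ hk
      simp only [trMat, blockBidiag, Matrix.of_apply]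
      rcases eq_or_ne (r.val % m) (k.val % m) with hmod | hmod
      · have hkval : (k : ℕ) = m * ((k : ℕ) / m) + r.val % m := by
          conv_lhs => rw [← Nat.div_add_mod k.val m]
          rw [hmod]
        have hne1 : (k : ℕ) / m ≠ l.val / n := by
          intro hdiv
          exact hk.1 (Fin.ext (by rw [hkval, hdiv]))
        have hne2 : (k : ℕ) / m ≠ l.val / n + 1 := by
          intro hdiv
          exact hk.2 (Fin.ext (by rw [hkval, hdiv]))
        rw [if_neg hne1, if_neg hne2, mul_zero]
      · rw [if_neg hmod, zero_mul]
  rw [hRHS]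
  -- helper: decode indices of the form n * p + (l % n)
  have hAe : ∀ (j : Fin ((s + 1) * m)) (p : ℕ), (j : ℕ) = n * p + l.val % n →
      (j : ℕ) / n = p ∧ (j : ℕ) % n = l.val % n := by
    intro j p hj
    constructor
    · rw [hj, Nat.mul_add_div hn, Nat.div_eq_of_lt hlmod, Nat.add_zero]
    · rw [hj, Nat.mul_add_mod, Nat.mod_eq_of_lt hlmod]
  -- a term of the LHS sum vanishes unless j encodes block (r/m) or block (r/m - 1)
  have hvan : ∀ (j : Fin ((s + 1) * m)),
      ((r.val / m ≠ 0 ∧ (j : ℕ) = n * (r.val / m - 1) + l.val % n) → False) →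
      ((j : ℕ) = n * (r.val / m) + l.val % n → False) →
      blockBidiag hm hn s (X + c • Y) Y r j * trMat n ((s + 1) * m) c j l = 0 := by
    intro j h2 h1
    simp only [trMat, blockBidiag, Matrix.of_apply]
    rcases eq_or_ne ((j : ℕ) % n) (l.val % n) with hmod | hmod
    · have hjv : (j : ℕ) = n * ((j : ℕ) / n) + l.val % n := by
        conv_lhs => rw [← Nat.div_add_mod j.val n]
        rw [hmod]
      have hne1 : r.val / m ≠ (j : ℕ) / n := by
        intro hdiv
        exact h1 (by rw [hjv, ← hdiv])
      have hne2 : r.val / m ≠ (j : ℕ) / n + 1 := by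
        intro hdiv
        have h0 : r.val / m ≠ 0 := by rw [hdiv]; exact Nat.succ_ne_zero _
        have hd : (j : ℕ) / n = r.val / m - 1 := by rw [hdiv, Nat.add_sub_cancel]
        refine h2 ⟨h0, ?_⟩
        rw [hjv, hd]
      rw [if_neg hne1, if_neg hne2, zero_mul]
    · rw [if_neg hmod, mul_zero]
  -- compute the LHS sum according to the position of r/m in {0, 1..s-1, s}
  by_cases hi0 : r.val / m = 0
  · -- only the diagonal block contributes: j1 = n*(r/m) + l%n
    have hj1v : n * (r.val / m) + l.val % n < (s + 1) * m := by
      have h' : n * (r.val / m) + l.val % n < n * s :=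
        calc n * (r.val / m) + l.val % n < n * (r.val / m) + n := by omega
        _ = n * (r.val / m + 1) := (Nat.mul_succ n _).symm
        _ ≤ n * s := Nat.mul_le_mul_left n (by rw [hi0]; omega)
      have h'' : n * s = s * n := Nat.mul_comm _ _
      omega
    rw [Finset.sum_eq_single (⟨n * (r.val / m) + l.val % n, hj1v⟩ : Fin ((s + 1) * m))]
    · obtain ⟨hd, hmd⟩ := hAe ⟨n * (r.val / m) + l.val % n, hj1v⟩ (r.val / m) rfl
      have hP := pascal_pow c (l.val / n) (r.val / m)
      rw [if_pos hi0] at hP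
      simp only [trMat, blockBidiag, Matrix.of_apply, hd, hmd, Matrix.add_apply,
        Matrix.smul_apply, smul_eq_mul, if_true]
      linear_combination Y ⟨r.val % m, hrmod⟩ ⟨l.val % n, hlmod⟩ * hP
    · intro j _ hj
      refine hvan j (fun h => h.1 hi0) (fun h => hj (Fin.ext h))
    · intro h
      exact absurd (Finset.mem_univ _) h
  · -- r/m = i' + 1 for some i'
    obtain ⟨i', hi'⟩ : ∃ i', r.val / m = i' + 1 :=
      ⟨r.val / m - 1, (Nat.succ_pred_eq_of_pos (Nat.pos_of_ne_zero hi0)).symm⟩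
    have hisub : r.val / m - 1 = i' := by rw [hi', Nat.add_sub_cancel]
    have hi1lt : i' + 1 < s + 1 := hi' ▸ hrml
    have hj2v : n * i' + l.val % n < (s + 1) * m := by
      have h' : n * i' + l.val % n < n * s :=
        calc n * i' + l.val % n < n * i' + n := by omega
        _ = n * (i' + 1) := (Nat.mul_succ n _).symm
        _ ≤ n * s := Nat.mul_le_mul_left n (by omega)
      have h'' : n * s = s * n := Nat.mul_comm _ _
      omega
    by_cases his : r.val / m = s
    · -- only the subdiagonal block contributes: j2 = n*i' + l%n
      have hi1s : i' + 1 = s := by rw [← hi', his]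
      rw [Finset.sum_eq_single (⟨n * i' + l.val % n, hj2v⟩ : Fin ((s + 1) * m))]
      · obtain ⟨hd, hmd⟩ := hAe ⟨n * i' + l.val % n, hj2v⟩ i' rfl
        have hcz : ((l.val / n).choose (i' + 1) : K) = 0 := by
          rw [Nat.choose_eq_zero_of_lt (Nat.lt_of_lt_of_eq hlnl hi1s.symm), Nat.cast_zero]
        have hP := pascal_pow c (l.val / n) (i' + 1)
        rw [if_neg (Nat.succ_ne_zero i'), Nat.add_sub_cancel, hcz] at hP
        simp only [trMat, blockBidiag, Matrix.of_apply, hd, hmd, hi',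
          Nat.succ_ne_self, if_true, if_false]
        rw [hcz]
        linear_combination Y ⟨r.val % m, hrmod⟩ ⟨l.val % n, hlmod⟩ * hP
      · intro j _ hj
        refine hvan j ?_ ?_
        case _ =>
          intro h
          refine hj (Fin.ext ?_)
          show (j : ℕ) = n * i' + l.val % n
          rw [← hisub]
          exact h.2
        intro h
        have hjd : (j : ℕ) / n = r.val / m := (hAe j (r.val / m) h).1
        have hjlt : (j : ℕ) < s * n := hs ▸ j.isLt
        have hjn : (j : ℕ) / n < s := (Nat.div_lt_iff_lt_mul hn).2 hjlt
        rw [hjd, his] at hjn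
        exact lt_irrefl s hjn
      · intro h
        exact absurd (Finset.mem_univ _) h
    · -- both blocks contribute
      have hi1s : i' + 1 < s := by
        have : r.val / m ≠ s := his
        omega
      have hj1v : n * (i' + 1) + l.val % n < (s + 1) * m := by
        have h' : n * (i' + 1) + l.val % n < n * s :=
          calc n * (i' + 1) + l.val % n < n * (i' + 1) + n := by omega
          _ = n * (i' + 1 + 1) := (Nat.mul_succ n _).symm
          _ ≤ n * s := Nat.mul_le_mul_left n (by omega)
        have h'' : n * s = s * n := Nat.mul_comm _ _
        omega
      rw [Finset.sum_eq_add_of_mem (⟨n * (i' + 1) + l.val % n, hj1v⟩ : Fin ((s + 1) * m))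
        (⟨n * i' + l.val % n, hj2v⟩ : Fin ((s + 1) * m))
        (Finset.mem_univ _) (Finset.mem_univ _)
        (by rw [ne_eq, Fin.ext_iff]; simp only; rw [Nat.mul_succ]; omega) ?_]
      · obtain ⟨hd1, hmd1⟩ := hAe ⟨n * (i' + 1) + l.val % n, hj1v⟩ (i' + 1) rfl
        obtain ⟨hd2, hmd2⟩ := hAe ⟨n * i' + l.val % n, hj2v⟩ i' rfl
        have hP := pascal_pow c (l.val / n) (i' + 1)
        rw [if_neg (Nat.succ_ne_zero i'), Nat.add_sub_cancel] at hP
        simp only [trMat, blockBidiag, Matrix.of_apply, hd1, hmd1, hd2, hmd2, hi',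
          Matrix.add_apply, Matrix.smul_apply, smul_eq_mul,
          Nat.succ_ne_self, if_true, if_false]
        linear_combination Y ⟨r.val % m, hrmod⟩ ⟨l.val % n, hlmod⟩ * hP
      · intro j _ hj
        refine hvan j ?_ ?_
        · intro h
          refine hj.2 (Fin.ext ?_)
          show (j : ℕ) = n * i' + l.val % n
          rw [← hisub]
          exact h.2
        · intro h
          refine hj.1 (Fin.ext ?_)
          show (j : ℕ) = n * (i' + 1) + l.val % n
          rw [← hi']
          exact h

/-- for m < n with n = m + gcd(m,n), replacing the diagonal blocks X
of the block bidiagonal matrix A(X,Y) by X + cY does not change the determinant. -/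
theorem det_blockBidiag_add_smul (K : Type*) [CommRing K] (m n : ℕ)
    (hm : 0 < m) (hmn : m < n) (hgcd : n = m + Nat.gcd m n)
    (X Y : Matrix (Fin m) (Fin n) K) (c : K) :
    (blockBidiag hm (hm.trans hmn) (m / Nat.gcd m n) (X + c • Y) Y).det =
      (blockBidiag hm (hm.trans hmn) (m / Nat.gcd m n) X Y).det := by
  set g := Nat.gcd m n with hgdef
  set s := m / g with hsdef
  have hsd : s * g = m := Nat.div_mul_cancel (Nat.gcd_dvd_left m n)
  have hs : (s + 1) * m = s * n := by
    have h1 : s * n = s * m + s * g := by rw [hgcd, Nat.mul_add]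
    rw [h1, hsd, add_mul, one_mul]
  have key := blockBidiag_mul_trMat hm (hm.trans hmn) s hs X Y c
  have h1 := congrArg Matrix.det key
  rw [Matrix.det_mul, Matrix.det_mul, trMat_det, trMat_det, mul_one, one_mul] at h1
  exact h1
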